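/- arXiv:1709.07185 — 3 statements merged into one kernel-verified Lean document; each statement's English description precedes it below -/
import Mathlib

section
/- Every L⁰-convex function f : E → L⁰ on an L⁰-module E has the local property: for every measurable set A and every x ∈ E, 1_A·f(x) = 1_A·f(1_A·x). -/
open MeasureTheory Filter

/-- `L⁰(Ω,Σ,ℙ)`: random variables modulo almost sure equality, realized as germs of
real-valued functions at the a.e. filter.  It is a commutative ring with the a.s.
pointwise order. -/
abbrev L0 {Ω : Type*} [MeasurableSpace Ω] (μ : Measure Ω) : Type _ :=
  Filter.Germ (MeasureTheory.ae μ) ℝ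

/-- The (class of the) indicator function `1_A` as an element of `L⁰`. -/
noncomputable def ind {Ω : Type*} [MeasurableSpace Ω] (μ : Measure Ω) (A : Set Ω) :
    L0 μ :=
  Filter.Germ.ofFun (A.indicator fun _ => (1 : ℝ))

/-- A countable measurable partition of `Ω` (pairwise disjoint measurable sets covering
`Ω` up to a null set). -/
def IsMPartition {Ω : Type*} [MeasurableSpace Ω] (μ : Measure Ω) (A : ℕ → Set Ω) : Prop :=
  (∀ k, MeasurableSet (A k)) ∧ Pairwise (Function.onFun Disjoint A) ∧ μ (⋃ k, A k)ᶜ = 0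

lemma ind_nonneg {Ω : Type*} [MeasurableSpace Ω] (μ : Measure Ω) (A : Set Ω) :
    0 ≤ ind μ A := by
  have : (0 : L0 μ) = Filter.Germ.ofFun (fun _ : Ω => (0 : ℝ)) := rfl
  rw [this, ind, Filter.Germ.coe_le]
  filter_upwards with ω
  by_cases h : ω ∈ A <;> simp [Set.indicator, h]

lemma ind_le_one {Ω : Type*} [MeasurableSpace Ω] (μ : Measure Ω) (A : Set Ω) :
    ind μ A ≤ 1 := by
  have : (1 : L0 μ) = Filter.Germ.ofFun (fun _ : Ω => (1 : ℝ)) := rfl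
  rw [this, ind, Filter.Germ.coe_le]
  filter_upwards with ω
  by_cases h : ω ∈ A <;> simp [Set.indicator, h]

lemma ind_idem {Ω : Type*} [MeasurableSpace Ω] (μ : Measure Ω) (A : Set Ω) :
    ind μ A * ind μ A = ind μ A := by
  rw [ind, ← Filter.Germ.coe_mul]
  congr 1
  funext ω
  by_cases h : ω ∈ A <;> simp [Set.indicator, h]

/-- Every `L⁰`-convex function `f : E → L⁰` on an `L⁰`-module `E` has
the local property: for every measurable set `A` and every `x ∈ E`,
`1_A · f(x) = 1_A · f(1_A · x)`. -/
theorem local_property_of_L0_convex {Ω : Type*} [MeasurableSpace Ω] (μ : Measure Ω)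
    [IsProbabilityMeasure μ] {E : Type*} [AddCommGroup E] [Module (L0 μ) E]
    (f : E → L0 μ)
    (hconv : ∀ x y : E, ∀ η : L0 μ, 0 ≤ η → η ≤ 1 →
      f (η • x + (1 - η) • y) ≤ η * f x + (1 - η) * f y) :
    ∀ A : Set Ω, MeasurableSet A → ∀ x : E,
      ind μ A * f x = ind μ A * f (ind μ A • x) := by
  intro A _ x
  set η := ind μ A with hη
  have h0 : 0 ≤ η := ind_nonneg μ A
  have h1 : η ≤ 1 := ind_le_one μ A
  have hid : η * η = η := ind_idem μ A
  have hcompl : η * (1 - η) = 0 := by rw [mul_sub, mul_one, hid, sub_self]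
  -- first inequality: f x ≤ η * f (η • x) + (1-η) * f ((1-η) • x)
  have key1 : f x ≤ η * f (η • x) + (1 - η) * f ((1 - η) • x) := by
    have := hconv (η • x) ((1 - η) • x) η h0 h1
    have hx : η • (η • x) + (1 - η) • ((1 - η) • x) = x := by
      rw [smul_smul, smul_smul, hid, ← add_smul]
      have : η + (1 - η) * (1 - η) = 1 := by
        have : (1 - η) * (1 - η) = 1 - η := by rw [sub_mul, one_mul, mul_sub, mul_one, hid]; ring
        rw [this]; ring
      rw [this, one_smul]
    rwa [hx] at this
  -- second inequality: f (η • x) ≤ η * f x + (1-η) * f (η • x)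
  have key2 : f (η • x) ≤ η * f x + (1 - η) * f (η • x) := by
    have := hconv x (η • x) η h0 h1
    have hx : η • x + (1 - η) • (η • x) = η • x := by
      rw [smul_smul]
      have : (1 - η) * η = 0 := by rw [mul_comm]; exact hcompl
      rw [this, zero_smul, add_zero]
    rwa [hx] at this
  apply le_antisymm
  · have := mul_le_mul_of_nonneg_left key1 h0
    calc η * f x ≤ η * (η * f (η • x) + (1 - η) * f ((1 - η) • x)) := this
      _ = (η * η) * f (η • x) + (η * (1 - η)) * f ((1 - η) • x) := by ring
      _ = η * f (η • x) := by rw [hid, hcompl]; ring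
  · have := mul_le_mul_of_nonneg_left key2 h0
    calc η * f (η • x) ≤ η * (η * f x + (1 - η) * f (η • x)) := this
      _ = (η * η) * f x + (η * (1 - η)) * f (η • x) := by ring
      _ = η * f x := by rw [hid, hcompl]; ring
end

section
/- If f : E → L⁰ has the local property and is lower bounded on each sublevel by its values, then each nonempty sublevel set V_f(η) = {x ∈ E : f(x) ≤ η} with η ∈ L⁰ is stable under countable concatenations. -/
open MeasureTheory Filter

/-- The countable concatenation property of an `L⁰`-module `E`. -/
def HasCCP {Ω : Type*} [MeasurableSpace Ω] (μ : Measure Ω) (E : Type*)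
    [AddCommGroup E] [Module (L0 μ) E] : Prop :=
  ∀ A : ℕ → Set Ω, IsMPartition μ A → ∀ x : ℕ → E,
    ∃! z : E, ∀ k, ind μ (A k) • z = ind μ (A k) • x k

/-- A subset of an `L⁰`-module is stable (under countable concatenations) if the
concatenation of any sequence of its elements along any countable measurable partition
again belongs to it. -/
def IsStable {Ω : Type*} [MeasurableSpace Ω] (μ : Measure Ω) {E : Type*}
    [AddCommGroup E] [Module (L0 μ) E] (S : Set E) : Prop :=
  ∀ A : ℕ → Set Ω, IsMPartition μ A → ∀ x : ℕ → E, (∀ k, x k ∈ S) →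
    ∀ z : E, (∀ k, ind μ (A k) • z = ind μ (A k) • x k) → z ∈ S

/-- If `f : E → L⁰` has the local property, then each nonempty
sublevel set `V_f(η) = {x ∈ E : f x ≤ η}` (η ∈ L⁰) is stable under countable
concatenations. -/
theorem sublevel_stable {Ω : Type*} [MeasurableSpace Ω] (μ : Measure Ω)
    [IsProbabilityMeasure μ] {E : Type*} [AddCommGroup E] [Module (L0 μ) E]
    (hccp : HasCCP μ E) (f : E → L0 μ)
    (hloc : ∀ A : Set Ω, MeasurableSet A → ∀ x : E,
      ind μ A * f x = ind μ A * f (ind μ A • x))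
    (η : L0 μ) (hne : ({x : E | f x ≤ η}).Nonempty) :
    IsStable μ {x : E | f x ≤ η} := by
  intro A hA x hx z hz
  obtain ⟨φ, hφ⟩ := Quotient.exists_rep (f z)
  obtain ⟨ψ, hψ⟩ := Quotient.exists_rep η
  have hindnn : ∀ k, (0 : L0 μ) ≤ ind μ (A k) := by
    intro k
    change ((fun _ => (0:ℝ)) : Ω → ℝ) ≤ (Filter.Germ.ofFun _ : L0 μ)
    exact Filter.Germ.coe_le.mpr (Filter.Eventually.of_forall fun ω =>
      Set.indicator_nonneg (fun _ _ => zero_le_one) ω)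
  have key : ∀ k, ind μ (A k) * f z ≤ ind μ (A k) * η := by
    intro k
    have h1 : ind μ (A k) * f z = ind μ (A k) * f (x k) := by
      rw [hloc (A k) (hA.1 k) z, hz k, ← hloc (A k) (hA.1 k) (x k)]
    rw [h1]
    exact mul_le_mul_of_nonneg_left (hx k) (hindnn k)
  have key2 : ∀ k, ∀ᵐ ω ∂μ, ω ∈ A k → φ ω ≤ ψ ω := by
    intro k
    have h := key k
    rw [← hφ, ← hψ] at h
    have h' : ∀ᶠ ω in ae μ,
        (A k).indicator (fun _ => (1:ℝ)) ω * φ ω ≤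
        (A k).indicator (fun _ => (1:ℝ)) ω * ψ ω := Filter.Germ.coe_le.mp h
    filter_upwards [h'] with ω hω hmem
    simpa [Set.indicator_of_mem hmem] using hω
  have hcov : ∀ᵐ ω ∂μ, ω ∈ ⋃ k, A k := hA.2.2
  show f z ≤ η
  rw [← hφ, ← hψ]
  refine Filter.Germ.coe_le.mpr ?_
  filter_upwards [hcov, ae_all_iff.mpr key2] with ω hω hall
  obtain ⟨k, hk⟩ := Set.mem_iUnion.mp hω
  exact hall k hk
end

section
/- In an L⁰-module E with the countable concatenation property, for any x, y ∈ E the supremum A_{x,y} = ⋁{B ∈ 𝓕 : 1_B·(x−y) = 0} in the measure algebra 𝓕 is attained, i.e., 1_{A_{x,y}}·x = 1_{A_{x,y}}·y. -/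
/-! Sets on which `x - y` vanishes are closed under countable unions: if every `1_{C n}`
annihilates `v`, then `1_B • v` with `B = ⋃ n, C n` is annihilated by each set of the cover
`Bᶜ ∪ C n` of `Ω`, hence by the disjointed partition, so it is the (unique) concatenation of the
zero sequence. Under a finite measure, a family of measurable sets closed under countable unions
contains an essentially largest member, the union of a sequence whose measures approach the
supremum. -/

open MeasureTheory Filter

open Set

section Indicator

variable {Ω : Type*} [MeasurableSpace Ω] (μ : Measure Ω)

lemma ind_empty : ind μ (∅ : Set Ω) = 0 := by
  simp only [ind, indicator_empty]
  rfl

lemma ind_inter (C D : Set Ω) : ind μ (C ∩ D) = ind μ C * ind μ D := by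
  rw [ind, ind, ind, ← Germ.coe_mul]
  exact congrArg _ (inter_indicator_one (s := C) (t := D))

variable {μ} {E : Type*} [AddCommGroup E] [Module (L0 μ) E]

lemma ind_smul_ind_smul (C D : Set Ω) (v : E) :
    ind μ C • ind μ D • v = ind μ (C ∩ D) • v := by
  rw [ind_inter, mul_smul]

lemma ind_smul_eq_zero_of_subset {C D : Set Ω} (h : D ⊆ C) {v : E}
    (hv : ind μ C • v = 0) : ind μ D • v = 0 := by
  rw [← inter_eq_left.2 h, ← ind_smul_ind_smul, hv, smul_zero]

end Indicator

lemma union_mem_of_forall_iUnion_mem {α : Type*} {S : Set (Set α)}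
    (hS : ∀ C : ℕ → Set α, (∀ n, C n ∈ S) → ⋃ n, C n ∈ S) {C D : Set α}
    (hC : C ∈ S) (hD : D ∈ S) : C ∪ D ∈ S := by
  have hunion : C ∪ D = ⋃ n : ℕ, if n = 0 then C else D := by
    ext ω
    simp only [mem_union, mem_iUnion]
    refine ⟨fun h => h.elim (fun hC => ⟨0, hC⟩) (fun hD => ⟨1, hD⟩), fun ⟨n, hn⟩ => ?_⟩
    split_ifs at hn
    exacts [Or.inl hn, Or.inr hn]
  exact hunion ▸ hS _ fun n => by split_ifs <;> assumption

theorem exists_forall_measure_diff_eq_zero_of_forall_iUnion_mem {Ω : Type*}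
    [MeasurableSpace Ω] (μ : Measure Ω) [IsFiniteMeasure μ] {S : Set (Set Ω)}
    (hne : S.Nonempty) (hmeas : ∀ C ∈ S, MeasurableSet C)
    (hS : ∀ C : ℕ → Set Ω, (∀ n, C n ∈ S) → ⋃ n, C n ∈ S) :
    ∃ B ∈ S, ∀ C ∈ S, μ (C \ B) = 0 := by
  obtain ⟨u, -, hlim, hmem⟩ := exists_seq_tendsto_sSup (hne.image μ) (OrderTop.bddAbove _)
  choose C hCS hCμ using hmem
  set B := ⋃ n, C n
  have hBS : B ∈ S := hS C hCS
  have hB_sup : μ B = sSup (μ '' S) :=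
    le_antisymm (le_sSup ⟨B, hBS, rfl⟩)
      (le_of_tendsto' hlim fun n => hCμ n ▸ measure_mono (subset_iUnion C n))
  refine ⟨B, hBS, fun D hD => ?_⟩
  have hle : μ (D \ B) + μ B ≤ 0 + μ B := by
    rw [zero_add, ← measure_union disjoint_sdiff_left (hmeas B hBS), sdiff_union_self, hB_sup]
    exact le_sSup ⟨_, union_mem_of_forall_iUnion_mem hS hD hBS, rfl⟩
  exact nonpos_iff_eq_zero.1 (ENNReal.le_of_add_le_add_right (measure_ne_top μ B) hle)

section CCP

variable {Ω : Type*} [MeasurableSpace Ω] {μ : Measure Ω}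

lemma isMPartition_disjointed {A : ℕ → Set Ω} (hA : ∀ k, MeasurableSet (A k))
    (hcover : μ (⋃ k, A k)ᶜ = 0) : IsMPartition μ (disjointed A) :=
  ⟨MeasurableSet.disjointed hA, disjoint_disjointed A, by rwa [iUnion_disjointed]⟩

variable {E : Type*} [AddCommGroup E] [Module (L0 μ) E]

lemma HasCCP.eq_zero_of_isMPartition (hccp : HasCCP μ E) {A : ℕ → Set Ω}
    (hA : IsMPartition μ A) {w : E} (hw : ∀ k, ind μ (A k) • w = 0) : w = 0 :=
  (hccp A hA fun _ => 0).unique (fun k => by rw [hw, smul_zero]) fun _ => rfl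

lemma HasCCP.eq_zero_of_iUnion_ae_eq_univ (hccp : HasCCP μ E) {A : ℕ → Set Ω}
    (hA : ∀ k, MeasurableSet (A k)) (hcover : μ (⋃ k, A k)ᶜ = 0) {w : E}
    (hw : ∀ k, ind μ (A k) • w = 0) : w = 0 :=
  hccp.eq_zero_of_isMPartition (isMPartition_disjointed hA hcover) fun k =>
    ind_smul_eq_zero_of_subset (disjointed_subset A k) (hw k)

lemma HasCCP.ind_iUnion_smul_eq_zero (hccp : HasCCP μ E) {C : ℕ → Set Ω}
    (hC : ∀ n, MeasurableSet (C n)) {v : E} (hv : ∀ n, ind μ (C n) • v = 0) :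
    ind μ (⋃ n, C n) • v = 0 := by
  set B := ⋃ n, C n
  refine hccp.eq_zero_of_iUnion_ae_eq_univ (A := fun n => Bᶜ ∪ C n)
    (fun n => (MeasurableSet.iUnion hC).compl.union (hC n)) ?_ fun n => ?_
  · rw [← union_iUnion, compl_union_self, compl_univ, measure_empty]
  · rw [ind_smul_ind_smul, union_inter_distrib_right, compl_inter_self, empty_union,
      inter_eq_left.2 (subset_iUnion C n), hv n]

end CCP

/-- In an `L⁰`-module `E` with the countable concatenation property,
for any `x, y ∈ E` the supremum `A_{x,y} = ⋁{B ∈ 𝓕 : 1_B·(x−y) = 0}` in the measure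
algebra is attained: there is a measurable set `B` with `1_B·(x−y) = 0` which dominates,
modulo null sets, every measurable `C` with `1_C·(x−y) = 0` (i.e. `B` represents the
supremum and `1_B·x = 1_B·y`). -/
theorem agreement_sup_attained {Ω : Type*} [MeasurableSpace Ω] (μ : Measure Ω)
    [IsProbabilityMeasure μ] {E : Type*} [AddCommGroup E] [Module (L0 μ) E]
    (hccp : HasCCP μ E) (x y : E) :
    ∃ B : Set Ω, MeasurableSet B ∧ ind μ B • (x - y) = 0 ∧
      ∀ C : Set Ω, MeasurableSet C → ind μ C • (x - y) = 0 → μ (C \ B) = 0 := by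
  obtain ⟨B, ⟨hB, hBv⟩, hmax⟩ :=
    exists_forall_measure_diff_eq_zero_of_forall_iUnion_mem μ
      (S := {C | MeasurableSet C ∧ ind μ C • (x - y) = 0})
      ⟨∅, MeasurableSet.empty, by rw [ind_empty, zero_smul]⟩ (fun _ hC => hC.1)
      fun C hC => ⟨MeasurableSet.iUnion fun n => (hC n).1,
        hccp.ind_iUnion_smul_eq_zero (fun n => (hC n).1) fun n => (hC n).2⟩
  exact ⟨B, hB, hBv, fun C hC hCv => hmax C ⟨hC, hCv⟩⟩
end
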